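/- For any two CM-types Φ, Φ′ of K there exists f ∈ Ind with r_{Φ′}(τ) = r_Φ(τ) + τ·f − f for all τ ∈ G, so the cohomology class [r_Φ] of the 1-cocycle r_Φ is independent of the CM-type Φ; moreover Φ ↦ r_Φ maps the set of CM-types of K onto the set of 1-cocycles in this class, and r_Φ = r_{Φ′} if and only if Φ′ = Φ or Φ′ = ιΦ. -/

import Mathlib

/-!
Let `χ_Φ = notMemIndicator Φ : G/H → ℤ/2ℤ`, a `0`-cochain of the larger module
`Map(G/H, ℤ/2ℤ)`. For every `φ` lying over `φH₀` one has
`r_Φ(τ)(φH₀) = χ_Φ(τ⁻¹φ) - χ_Φ(φ)`, so `r_Φ` is the coboundary of `χ_Φ`; and `Φ` is a CM-type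
exactly when `χ_Φ(ιφ) = χ_Φ(φ) + 1`. For two CM-types, `χ_Φ' - χ_Φ` is therefore `ι`-invariant,
so it descends to some `f ∈ Ind`, and `r_Φ' - r_Φ` is the coboundary of `f`. Conversely
`χ_Φ + f ∘ proj` is `χ_Φ'` for a CM-type `Φ'`. Finally `r_Φ = r_Φ'` says that `χ_Φ' - χ_Φ` is
`G`-invariant, hence constant on the transitive `G`-set `G/H`: the constant `0` gives `Φ' = Φ`,
the constant `1` gives `Φ' = ιΦ`.
-/

/- Common combinatorial skeleton for the Galois-theoretic setting of the paper:
`G = Gal(K^c/ℚ)`, `H = Gal(K^c/K)`, `H₀ = Gal(K^c/K₀)`, `ι` the complex conjugation.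
Embeddings `K ↪ ℂ` correspond to left cosets `G ⧸ H`, embeddings `K₀ ↪ ℂ` to `G ⧸ H₀`. -/

open Pointwise

variable {G : Type} [Group G]

/-- A CM-type of `K`: a set `Φ` of embeddings `K ↪ ℂ` (i.e. of cosets in `G ⧸ H`) such that
`Φ` and `ιΦ` are disjoint and every embedding lies in `Φ ∪ ιΦ`. -/
def IsCMType (H : Subgroup G) (ι : G) (Φ : Set (G ⧸ H)) : Prop :=
  (∀ φ ∈ Φ, ι • φ ∉ Φ) ∧ ∀ φ : G ⧸ H, φ ∈ Φ ∨ ι • φ ∈ Φ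

/-- `S_Φ = ⋃_{φ ∈ Φ} φH ⊆ G`. -/
def SPhi (H : Subgroup G) (Φ : Set (G ⧸ H)) : Set G := {g : G | (g : G ⧸ H) ∈ Φ}

/-- `H̃(Φ) = {σ ∈ G : σ S_Φ = S_Φ}`. -/
def Htilde (H : Subgroup G) (Φ : Set (G ⧸ H)) : Subgroup G := MulAction.stabilizer G (SPhi H Φ)

/-- The natural projection `G ⧸ H → G ⧸ H₀` (restriction of embeddings of `K` to `K₀`). -/
def proj (H H₀ : Subgroup G) (h : H ≤ H₀) : G ⧸ H → G ⧸ H₀ :=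
  Quotient.map' id fun a b hab => by
    rw [QuotientGroup.leftRel_apply] at *
    exact h hab

open Classical in
/-- The 1-cocycle `r_Φ : G → Ind`, `r_Φ(τ)(φᵢH₀) = 0` iff `τ⁻¹φᵢ ∈ Φ`, where `φᵢ` is the
unique member of `Φ` lying over the coset `φᵢH₀`. -/
noncomputable def rPhi (H H₀ : Subgroup G) (h : H ≤ H₀) (Φ : Set (G ⧸ H)) (τ : G) :
    (G ⧸ H₀) → ZMod 2 :=
  fun x => if ∃ φ ∈ Φ, proj H H₀ h φ = x ∧ τ⁻¹ • φ ∈ Φ then 0 else 1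

/-- The action of `G` on `Ind = Map(G/H₀, ℤ/2ℤ)`, `(σ·f)(τH₀) = f(σ⁻¹τH₀)`. -/
def indAct (H₀ : Subgroup G) (σ : G) (f : (G ⧸ H₀) → ZMod 2) : (G ⧸ H₀) → ZMod 2 :=
  fun x => f (σ⁻¹ • x)

/-- For `f ∈ Ind`, the CM-type `Φ_f = {ι^{f(φ₁H₀)}φ₁, …, ι^{f(φ_NH₀)}φ_N}` attached to a fixed
CM-type `Φ₀`. -/
noncomputable def PhiF (H H₀ : Subgroup G) (h : H ≤ H₀) (ι : G) (Φ₀ : Set (G ⧸ H))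
    (f : (G ⧸ H₀) → ZMod 2) : Set (G ⧸ H) :=
  (fun φ => ι ^ (f (proj H H₀ h φ)).val • φ) '' Φ₀

/-- The `*`-action of `G` on `Ind`: `τ * f := r_{Φ₀}(τ) + τ·f`. -/
noncomputable def starAct (H H₀ : Subgroup G) (h : H ≤ H₀) (Φ₀ : Set (G ⧸ H)) (τ : G)
    (f : (G ⧸ H₀) → ZMod 2) : (G ⧸ H₀) → ZMod 2 :=
  rPhi H H₀ h Φ₀ τ + indAct H₀ τ f


open Function

section NotMemIndicator

variable {α : Type*}

open Classical in
noncomputable def notMemIndicator (s : Set α) (a : α) : ZMod 2 := if a ∈ s then 0 else 1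

lemma notMemIndicator_eq_zero_iff {s : Set α} {a : α} : notMemIndicator s a = 0 ↔ a ∈ s := by
  unfold notMemIndicator
  split_ifs with h <;> simp [h]

lemma notMemIndicator_injective : Injective (notMemIndicator : Set α → α → ZMod 2) :=
  fun s t h => Set.ext fun a => by
    rw [← notMemIndicator_eq_zero_iff, ← notMemIndicator_eq_zero_iff, h]

lemma notMemIndicator_setOf_eq_zero (g : α → ZMod 2) : notMemIndicator {a | g a = 0} = g := by
  funext a
  unfold notMemIndicator
  split_ifs with h
  · exact h.symm
  · have h01 : ∀ x : ZMod 2, x ≠ 0 → 1 = x := by decide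
    exact h01 _ h

end NotMemIndicator

variable {G : Type} [Group G] {H H₀ : Subgroup G} {ι : G}

lemma isCMType_iff_notMemIndicator_smul {Φ : Set (G ⧸ H)} :
    IsCMType H ι Φ ↔ ∀ φ, notMemIndicator Φ (ι • φ) = notMemIndicator Φ φ + 1 := by
  unfold IsCMType notMemIndicator
  constructor
  · rintro ⟨hdisj, hcover⟩ φ
    by_cases hφ : φ ∈ Φ
    · rw [if_pos hφ, if_neg (hdisj φ hφ), zero_add]
    · rw [if_neg hφ, if_pos ((hcover φ).resolve_left hφ)]
      decide
  · intro h
    refine ⟨fun φ hφ hιφ => ?_, fun φ => ?_⟩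
    · simpa [hφ, hιφ] using h φ
    · by_contra! hφ
      simpa [hφ.1, hφ.2] using h φ

lemma IsCMType.notMemIndicator_smul {Φ : Set (G ⧸ H)} (hΦ : IsCMType H ι Φ) (φ : G ⧸ H) :
    notMemIndicator Φ (ι • φ) = notMemIndicator Φ φ + 1 :=
  isCMType_iff_notMemIndicator_smul.1 hΦ φ

lemma proj_smul (hle : H ≤ H₀) (τ : G) (φ : G ⧸ H) :
    proj H H₀ hle (τ • φ) = τ • proj H H₀ hle φ := by
  obtain ⟨g, rfl⟩ := QuotientGroup.mk_surjective φ
  rfl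

lemma proj_surjective (hle : H ≤ H₀) : Surjective (proj H H₀ hle) := by
  intro x
  obtain ⟨g, rfl⟩ := QuotientGroup.mk_surjective x
  exact ⟨g, rfl⟩

structure IsCMConjugation (H H₀ : Subgroup G) (ι : G) : Prop where
  mul_self : ι * ι = 1
  commute : ∀ g : G, g * ι = ι * g
  mem_iff : ∀ g : G, g ∈ H₀ ↔ g ∈ H ∨ ι * g ∈ H

namespace IsCMConjugation

variable (hc : IsCMConjugation H H₀ ι) (hle : H ≤ H₀)
include hc

lemma smul_comm {X : Type*} [MulAction G X] (τ : G) (x : X) : ι • τ • x = τ • ι • x := by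
  rw [smul_smul, smul_smul, hc.commute]

lemma inv_mul_mul_self (a b : G) : (ι * a)⁻¹ * b = ι * (a⁻¹ * b) := by
  rw [mul_inv_rev, inv_eq_of_mul_eq_one_left hc.mul_self, ← mul_assoc, ← hc.commute a⁻¹]

lemma proj_eq_proj_iff {φ ψ : G ⧸ H} :
    proj H H₀ hle φ = proj H H₀ hle ψ ↔ ψ = φ ∨ ψ = ι • φ := by
  obtain ⟨a, rfl⟩ := QuotientGroup.mk_surjective φ
  obtain ⟨b, rfl⟩ := QuotientGroup.mk_surjective ψ
  have hH : ((b : G ⧸ H) = a) ↔ a⁻¹ * b ∈ H := eq_comm.trans QuotientGroup.eq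
  have hιH : ((b : G ⧸ H) = ι • (a : G ⧸ H)) ↔ ι * (a⁻¹ * b) ∈ H := by
    rw [eq_comm, ← hc.inv_mul_mul_self]
    exact QuotientGroup.eq
  rw [hH, hιH, ← hc.mem_iff]
  exact QuotientGroup.eq

lemma proj_smul_self (φ : G ⧸ H) : proj H H₀ hle (ι • φ) = proj H H₀ hle φ :=
  ((hc.proj_eq_proj_iff hle).2 (Or.inr rfl)).symm

lemma exists_comp_proj_eq {β : Type*} (F : G ⧸ H → β) (hF : ∀ φ, F (ι • φ) = F φ) :
    ∃ f : G ⧸ H₀ → β, ∀ φ, f (proj H H₀ hle φ) = F φ := by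
  refine ⟨F ∘ surjInv (proj_surjective hle), fun φ => ?_⟩
  rcases (hc.proj_eq_proj_iff hle).1 (surjInv_eq (proj_surjective hle) (proj H H₀ hle φ)).symm
    with h | h
  · exact congrArg F h
  · rw [comp_apply, h, hF]

end IsCMConjugation

variable {Φ Φ' : Set (G ⧸ H)}

lemma IsCMType.eq_of_proj_eq (hΦ : IsCMType H ι Φ) (hc : IsCMConjugation H H₀ ι) (hle : H ≤ H₀)
    {φ ψ : G ⧸ H} (hφ : φ ∈ Φ) (hψ : ψ ∈ Φ) (h : proj H H₀ hle φ = proj H H₀ hle ψ) : ψ = φ :=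
  ((hc.proj_eq_proj_iff hle).1 h).resolve_right fun hψι => hΦ.1 φ hφ (hψι ▸ hψ)

lemma notMemIndicator_smul_set (hc : IsCMConjugation H H₀ ι) (φ : G ⧸ H) :
    notMemIndicator (ι • Φ) φ = notMemIndicator Φ (ι • φ) := by
  unfold notMemIndicator
  rw [Set.mem_smul_set_iff_inv_smul_mem, inv_eq_of_mul_eq_one_left hc.mul_self]

open Classical in
lemma rPhi_proj_of_mem (hΦ : IsCMType H ι Φ) (hc : IsCMConjugation H H₀ ι) (hle : H ≤ H₀)
    (τ : G) {φ : G ⧸ H} (hφ : φ ∈ Φ) :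
    rPhi H H₀ hle Φ τ (proj H H₀ hle φ) = notMemIndicator Φ (τ⁻¹ • φ) :=
  if_congr ⟨fun ⟨_, hψ, hp, hτψ⟩ => hΦ.eq_of_proj_eq hc hle hψ hφ hp ▸ hτψ,
    fun hτφ => ⟨φ, hφ, rfl, hτφ⟩⟩ rfl rfl

lemma rPhi_proj (hΦ : IsCMType H ι Φ) (hc : IsCMConjugation H H₀ ι) (hle : H ≤ H₀)
    (τ : G) (φ : G ⧸ H) :
    rPhi H H₀ hle Φ τ (proj H H₀ hle φ)
      = notMemIndicator Φ (τ⁻¹ • φ) - notMemIndicator Φ φ := by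
  by_cases hφ : φ ∈ Φ
  · rw [rPhi_proj_of_mem hΦ hc hle τ hφ, notMemIndicator_eq_zero_iff.2 hφ, sub_zero]
  have hιφ : ι • φ ∈ Φ := (hΦ.2 φ).resolve_left hφ
  calc rPhi H H₀ hle Φ τ (proj H H₀ hle φ)
      = rPhi H H₀ hle Φ τ (proj H H₀ hle (ι • φ)) := by rw [hc.proj_smul_self]
    _ = notMemIndicator Φ (ι • τ⁻¹ • φ) - notMemIndicator Φ (ι • φ) := by
      rw [rPhi_proj_of_mem hΦ hc hle τ hιφ, hc.smul_comm, notMemIndicator_eq_zero_iff.2 hιφ,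
        sub_zero]
    _ = notMemIndicator Φ (τ⁻¹ • φ) - notMemIndicator Φ φ := by
      rw [hΦ.notMemIndicator_smul, hΦ.notMemIndicator_smul]
      ring

lemma rPhi_eq_add_indAct_sub (hΦ : IsCMType H ι Φ) (hΦ' : IsCMType H ι Φ')
    (hc : IsCMConjugation H H₀ ι) (hle : H ≤ H₀) (f : G ⧸ H₀ → ZMod 2)
    (hf : ∀ φ, notMemIndicator Φ' φ = notMemIndicator Φ φ + f (proj H H₀ hle φ)) (τ : G) :
    rPhi H H₀ hle Φ' τ = rPhi H H₀ hle Φ τ + indAct H₀ τ f - f := by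
  funext x
  obtain ⟨φ, rfl⟩ := proj_surjective hle x
  simp only [Pi.add_apply, Pi.sub_apply, indAct, ← proj_smul, rPhi_proj hΦ hc hle,
    rPhi_proj hΦ' hc hle, hf]
  ring

lemma exists_rPhi_eq_add_indAct_sub (hΦ : IsCMType H ι Φ) (hΦ' : IsCMType H ι Φ')
    (hc : IsCMConjugation H H₀ ι) (hle : H ≤ H₀) :
    ∃ f : G ⧸ H₀ → ZMod 2, ∀ τ, rPhi H H₀ hle Φ' τ = rPhi H H₀ hle Φ τ + indAct H₀ τ f - f := by
  obtain ⟨f, hf⟩ := hc.exists_comp_proj_eq hle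
    (fun φ => notMemIndicator Φ' φ - notMemIndicator Φ φ) fun φ => by
      simp only [hΦ.notMemIndicator_smul, hΦ'.notMemIndicator_smul]
      ring
  exact ⟨f, rPhi_eq_add_indAct_sub hΦ hΦ' hc hle f fun φ => by rw [hf]; ring⟩

lemma exists_isCMType_rPhi_eq_add_indAct_sub (hΦ : IsCMType H ι Φ)
    (hc : IsCMConjugation H H₀ ι) (hle : H ≤ H₀) (f : G ⧸ H₀ → ZMod 2) :
    ∃ Φ', IsCMType H ι Φ' ∧ ∀ τ,
      rPhi H H₀ hle Φ' τ = rPhi H H₀ hle Φ τ + indAct H₀ τ f - f := by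
  set g : G ⧸ H → ZMod 2 := fun φ => notMemIndicator Φ φ + f (proj H H₀ hle φ)
  have hg : notMemIndicator {φ | g φ = 0} = g := notMemIndicator_setOf_eq_zero g
  have hΦ' : IsCMType H ι {φ | g φ = 0} := isCMType_iff_notMemIndicator_smul.2 fun φ => by
    simp only [hg, g, hΦ.notMemIndicator_smul, hc.proj_smul_self]
    ring
  exact ⟨_, hΦ', rPhi_eq_add_indAct_sub hΦ hΦ' hc hle f fun φ => by rw [hg]⟩

lemma rPhi_eq_rPhi_iff_exists_const (hΦ : IsCMType H ι Φ) (hΦ' : IsCMType H ι Φ')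
    (hc : IsCMConjugation H H₀ ι) (hle : H ≤ H₀) :
    (∀ τ, rPhi H H₀ hle Φ τ = rPhi H H₀ hle Φ' τ) ↔
      ∃ c, ∀ φ, notMemIndicator Φ' φ = notMemIndicator Φ φ + c := by
  constructor
  · intro h
    set o : G ⧸ H := ((1 : G) : G ⧸ H)
    refine ⟨notMemIndicator Φ' o - notMemIndicator Φ o, fun φ => ?_⟩
    obtain ⟨τ, rfl⟩ := MulAction.exists_smul_eq G o φ
    have hτ := congrFun (h τ) (proj H H₀ hle (τ • o))
    rw [rPhi_proj hΦ hc hle, rPhi_proj hΦ' hc hle, inv_smul_smul] at hτ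
    linear_combination hτ
  · rintro ⟨c, hconst⟩ τ
    funext x
    obtain ⟨φ, rfl⟩ := proj_surjective hle x
    rw [rPhi_proj hΦ hc hle, rPhi_proj hΦ' hc hle, hconst, hconst]
    ring

lemma rPhi_eq_rPhi_iff (hΦ : IsCMType H ι Φ) (hΦ' : IsCMType H ι Φ')
    (hc : IsCMConjugation H H₀ ι) (hle : H ≤ H₀) :
    (∀ τ, rPhi H H₀ hle Φ τ = rPhi H H₀ hle Φ' τ) ↔ Φ' = Φ ∨ Φ' = ι • Φ := by
  rw [rPhi_eq_rPhi_iff_exists_const hΦ hΦ' hc hle]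
  constructor
  · rintro ⟨c, hconst⟩
    have hc01 : ∀ c : ZMod 2, c = 0 ∨ c = 1 := by decide
    rcases hc01 c with rfl | rfl
    · left
      exact notMemIndicator_injective (funext fun φ => by rw [hconst, add_zero])
    · right
      refine notMemIndicator_injective (funext fun φ => ?_)
      rw [hconst, notMemIndicator_smul_set hc, hΦ.notMemIndicator_smul]
  · rintro (rfl | rfl)
    · exact ⟨0, fun φ => (add_zero _).symm⟩
    · exact ⟨1, fun φ => by rw [notMemIndicator_smul_set hc, hΦ.notMemIndicator_smul]⟩

theorem rPhi_cohomology_class_general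
    {G : Type} [Group G] (H H₀ : Subgroup G) (hle : H ≤ H₀) (ι : G)
    (hι2 : ι * ι = 1) (hcent : ∀ g : G, g * ι = ι * g)
    (hcosets : ∀ g : G, g ∈ H₀ ↔ g ∈ H ∨ ι * g ∈ H) :
    (∀ Φ Φ' : Set (G ⧸ H), IsCMType H ι Φ → IsCMType H ι Φ' →
        ∃ f : (G ⧸ H₀) → ZMod 2, ∀ τ : G,
          rPhi H H₀ hle Φ' τ = rPhi H H₀ hle Φ τ + indAct H₀ τ f - f) ∧
    (∀ Φ : Set (G ⧸ H), IsCMType H ι Φ → ∀ f : (G ⧸ H₀) → ZMod 2,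
        ∃ Φ' : Set (G ⧸ H), IsCMType H ι Φ' ∧ ∀ τ : G,
          rPhi H H₀ hle Φ' τ = rPhi H H₀ hle Φ τ + indAct H₀ τ f - f) ∧
    (∀ Φ Φ' : Set (G ⧸ H), IsCMType H ι Φ → IsCMType H ι Φ' →
        ((∀ τ : G, rPhi H H₀ hle Φ τ = rPhi H H₀ hle Φ' τ) ↔ (Φ' = Φ ∨ Φ' = ι • Φ))) := by
  have hc : IsCMConjugation H H₀ ι := ⟨hι2, hcent, hcosets⟩
  exact ⟨fun Φ Φ' hΦ hΦ' => exists_rPhi_eq_add_indAct_sub hΦ hΦ' hc hle,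
    fun Φ hΦ f => exists_isCMType_rPhi_eq_add_indAct_sub hΦ hc hle f,
    fun Φ Φ' hΦ hΦ' => rPhi_eq_rPhi_iff hΦ hΦ' hc hle⟩

/-- For any two CM-types `Φ, Φ′` of `K` there is `f ∈ Ind` with
`r_{Φ′}(τ) = r_Φ(τ) + τ·f − f` for all `τ ∈ G` (so the cohomology class `[r_Φ]` does not
depend on `Φ`); moreover `Φ ↦ r_Φ` maps the CM-types of `K` onto the set of 1-cocycles in this
class, and `r_Φ = r_{Φ′}` iff `Φ′ = Φ` or `Φ′ = ιΦ`. -/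
theorem rPhi_cohomology_class
    {G : Type} [Group G] [Finite G] (H H₀ : Subgroup G) (hle : H ≤ H₀) (ι : G)
    (hι2 : ι * ι = 1) (hι1 : ι ≠ 1) (hcent : ∀ g : G, g * ι = ι * g)
    (hιH : ι ∉ H) (hιH₀ : ι ∈ H₀)
    (hcosets : ∀ g : G, g ∈ H₀ ↔ g ∈ H ∨ ι * g ∈ H) :
    (∀ Φ Φ' : Set (G ⧸ H), IsCMType H ι Φ → IsCMType H ι Φ' →
        ∃ f : (G ⧸ H₀) → ZMod 2, ∀ τ : G,
          rPhi H H₀ hle Φ' τ = rPhi H H₀ hle Φ τ + indAct H₀ τ f - f) ∧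
    (∀ Φ : Set (G ⧸ H), IsCMType H ι Φ → ∀ f : (G ⧸ H₀) → ZMod 2,
        ∃ Φ' : Set (G ⧸ H), IsCMType H ι Φ' ∧ ∀ τ : G,
          rPhi H H₀ hle Φ' τ = rPhi H H₀ hle Φ τ + indAct H₀ τ f - f) ∧
    (∀ Φ Φ' : Set (G ⧸ H), IsCMType H ι Φ → IsCMType H ι Φ' →
        ((∀ τ : G, rPhi H H₀ hle Φ τ = rPhi H H₀ hle Φ' τ) ↔ (Φ' = Φ ∨ Φ' = ι • Φ))) :=
  rPhi_cohomology_class_general H H₀ hle ι hι2 hcent hcosets
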